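/- For every ε ∈ (0,1) there is a constant C > 0 (depending only on ε) such that the following holds. Let G be a finite abelian group, let ν : G → ℝ_{≥0} be a probability measure with ν̂ ≥ 0, and let f : G → ℝ satisfy f̂ ≥ 0. If ‖f‖_{p(ν)} ≥ ε for some real p ≥ 1, then there exists a real p' with 1 ≤ p' ≤ C·p such that ‖f + 1‖_{p'(ν)} ≥ 1 + ε/2. -/

import Mathlib

open scoped Classical Pointwise

noncomputable section

variable {G : Type*} [AddCommGroup G] [Fintype G]

/-- The average `𝔼_{x ∈ G} f(x)`. -/
def gavg (f : G → ℝ) : ℝ := (∑ x, f x) / (Fintype.card G : ℝ)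

/-- The inner product `⟨f, g⟩ = 𝔼_{x ∈ G} f(x) g(x)`. -/
def ginner (f g : G → ℝ) : ℝ := gavg (fun x => f x * g x)

/-- The convolution `f ∗ g (x) = 𝔼_y f(y) g(x - y)`. -/
def gconv (f g : G → ℝ) : G → ℝ := fun x => gavg (fun y => f y * g (x - y))

/-- The difference convolution `f ∘ g (x) = 𝔼_y f(y) g(x + y)`. -/
def gdconv (f g : G → ℝ) : G → ℝ := fun x => gavg (fun y => f y * g (x + y))

/-- The `L^p(ν)` norm `(𝔼_x ν(x) |f(x)|^p)^(1/p)`. -/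
def gnorm (p : ℝ) (ν : G → ℝ) (f : G → ℝ) : ℝ := (gavg fun x => ν x * |f x| ^ p) ^ (1 / p)

/-- The `L^∞` norm `max_x |f(x)|`. -/
def gsup (f : G → ℝ) : ℝ := ⨆ x, |f x|

/-- The normalised indicator `μ_A = (|G|/|A|) · 1_A`. -/
def gmu (A : Finset G) : G → ℝ := fun x => if x ∈ A then (Fintype.card G : ℝ) / (A.card : ℝ) else 0

/-- The indicator function `1_A`. -/
def gind (A : Finset G) : G → ℝ := fun x => if x ∈ A then 1 else 0

/-- The density `|A|/|G|` of `A` in `G`. -/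
def gdens (A : Finset G) : ℝ := (A.card : ℝ) / (Fintype.card G : ℝ)

/-- The relative density `μ_B(A) = |A ∩ B| / |B|`. -/
def grel (B A : Finset G) : ℝ := ((A ∩ B).card : ℝ) / (B.card : ℝ)

/-- `f` has nonnegative (real) Fourier transform: for every character `γ` of `G`,
`f̂(γ) = 𝔼_x f(x) γ(-x)` is a nonnegative real number. -/
def FourierNonneg (f : G → ℝ) : Prop :=
  ∀ γ : AddChar G ℂ, ∃ r : ℝ, 0 ≤ r ∧
    (∑ x, (f x : ℂ) * γ (-x)) / (Fintype.card G : ℂ) = (r : ℂ)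

/-- A Bohr set, given by a frequency set of characters together with a width function. -/
structure BohrSet (H : Type*) [AddCommGroup H] where
  freq : Finset (AddChar H ℂ)
  width : AddChar H ℂ → ℝ

namespace BohrSet

variable {H : Type*} [AddCommGroup H]

/-- The rank of a Bohr set: the size of its frequency set. -/
def rank (B : BohrSet H) : ℕ := B.freq.card

/-- The dilate `B_ρ` of a Bohr set: the width is dilated by `ρ`. -/
def dilate (B : BohrSet H) (ρ : ℝ) : BohrSet H := ⟨B.freq, fun γ => ρ * B.width γ⟩

/-- The underlying set `{x : |1 - γ(x)| ≤ ν(γ) ∀ γ ∈ Γ}` of a Bohr set. -/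
def toFinset [Fintype H] (B : BohrSet H) : Finset H :=
  Finset.univ.filter fun x => ∀ γ ∈ B.freq, ‖(1 - γ x : ℂ)‖ ≤ B.width γ

/-- A Bohr set of rank `d` is regular if `(1 - 100d|κ|)|B| ≤ |B_{1+κ}| ≤ (1 + 100d|κ|)|B|`
for all `|κ| ≤ 1/(100d)`. -/
def IsRegular [Fintype H] (B : BohrSet H) : Prop :=
  ∀ κ : ℝ, |κ| ≤ 1 / (100 * B.rank) →
    (1 - 100 * B.rank * |κ|) * (B.toFinset.card : ℝ) ≤ ((B.dilate (1 + κ)).toFinset.card : ℝ) ∧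
    ((B.dilate (1 + κ)).toFinset.card : ℝ) ≤ (1 + 100 * B.rank * |κ|) * (B.toFinset.card : ℝ)

end BohrSet

/-- The dilate `k·B = {kb : b ∈ B}` of a finite set. -/
def kdil (k : ℕ) (B : Finset G) : Finset G := B.image fun x => k • x

lemma coeff_eq {f : G → ℝ} (ψ : AddChar G ℂ) :
    ((AddChar.complexBasis G).repr (fun x => (f x : ℂ))) ψ * (Fintype.card G : ℂ)
      = ∑ x, (f x : ℂ) * ψ (-x) := by
  set B := AddChar.complexBasis G
  set F : G → ℂ := fun x => (f x : ℂ) with hF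
  have hsum : ∀ x, ∑ φ : AddChar G ℂ, B.repr F φ * φ x = F x := by
    intro x
    have := congrFun (B.sum_repr F) x
    simpa [B, AddChar.complexBasis_apply] using this
  calc B.repr F ψ * (Fintype.card G : ℂ)
      = ∑ φ : AddChar G ℂ, B.repr F φ * (if φ = ψ then (Fintype.card G : ℂ) else 0) := by
        simp [mul_ite, mul_zero, Finset.sum_ite_eq]
    _ = ∑ φ : AddChar G ℂ, B.repr F φ * ∑ x, (ψ⁻¹ * φ) x := by
        refine Finset.sum_congr rfl fun φ _ => ?_
        congr 1
        rw [AddChar.sum_eq_ite]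
        have : ψ⁻¹ * φ = 0 ↔ φ = ψ := by
          rw [show (0 : AddChar G ℂ) = 1 from rfl, inv_mul_eq_one, eq_comm]
        simp [this]
    _ = ∑ x, ψ (-x) * F x := by
        simp_rw [AddChar.mul_apply, AddChar.inv_apply, Finset.mul_sum]
        rw [Finset.sum_comm]
        refine Finset.sum_congr rfl fun x _ => ?_
        rw [← hsum x, Finset.mul_sum]
        exact Finset.sum_congr rfl fun φ _ => by ring
    _ = ∑ x, (f x : ℂ) * ψ (-x) := Finset.sum_congr rfl fun x _ => by rw [mul_comm]

lemma moment_nonneg {ν f : G → ℝ} (hν : FourierNonneg ν) (hf : FourierNonneg f) (n : ℕ) :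
    0 ≤ ∑ x, ν x * f x ^ n := by
  classical
  set B := AddChar.complexBasis G with hB
  set F : G → ℂ := fun x => (f x : ℂ) with hF
  have hcard : (Fintype.card G : ℂ) ≠ 0 := Nat.cast_ne_zero.2 Fintype.card_ne_zero
  have hc : ∀ ψ : AddChar G ℂ, ∃ r : ℝ, 0 ≤ r ∧ B.repr F ψ = (r : ℂ) := by
    intro ψ
    obtain ⟨r, hr0, hr⟩ := hf ψ
    refine ⟨r, hr0, ?_⟩
    have h1 := coeff_eq (f := f) ψ
    rw [div_eq_iff hcard] at hr
    rw [← hF] at h1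
    have := h1.trans hr
    exact mul_right_cancel₀ hcard this
  have hn' : ∀ ψ : AddChar G ℂ, ∃ r : ℝ, 0 ≤ r ∧ ∑ x, (ν x : ℂ) * ψ x = (r : ℂ) := by
    intro ψ
    obtain ⟨r, hr0, hr⟩ := hν ψ⁻¹
    rw [div_eq_iff hcard] at hr
    refine ⟨r * Fintype.card G, by positivity, ?_⟩
    have : ∀ x : G, ψ⁻¹ (-x) = ψ x := fun x => by rw [AddChar.inv_apply, neg_neg]
    simp_rw [this] at hr
    rw [hr]; push_cast; ring
  choose rc hrc0 hrceq using hc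
  choose s hs0 hseq using hn'
  have hFx : ∀ x, F x = ∑ ψ : AddChar G ℂ, B.repr F ψ * ψ x := by
    intro x
    have := congrFun (B.sum_repr F) x
    simp only [hB, AddChar.complexBasis_apply] at this ⊢
    rw [← this]
    simp
  have key : ((∑ x, ν x * f x ^ n : ℝ) : ℂ) =
      ∑ t ∈ Fintype.piFinset (fun _ : Fin n => (Finset.univ : Finset (AddChar G ℂ))),
        ((∏ i, (rc (t i) : ℂ)) * (s (∏ i, t i) : ℂ)) := by
    push_cast
    have : ∀ x : G, (f x : ℂ) ^ n = ∑ t ∈ Fintype.piFinset (fun _ : Fin n =>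
        (Finset.univ : Finset (AddChar G ℂ))), ∏ i, (rc (t i) : ℂ) * (t i) x := by
      intro x
      have h0 : (f x : ℂ) = F x := rfl
      rw [h0, hFx x]
      rw [show (∑ ψ : AddChar G ℂ, B.repr F ψ * ψ x) ^ n
          = ∏ _i : Fin n, ∑ ψ : AddChar G ℂ, B.repr F ψ * ψ x by
        simp [Finset.prod_const]]
      rw [Finset.prod_univ_sum]
      refine Finset.sum_congr rfl fun t _ => Finset.prod_congr rfl fun i _ => by
        rw [hrceq]
    simp_rw [this, Finset.mul_sum]
    rw [Finset.sum_comm]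
    refine Finset.sum_congr rfl fun t _ => ?_
    have : ∀ x : G, (ν x : ℂ) * ∏ i, (rc (t i) : ℂ) * (t i) x
        = (∏ i, (rc (t i) : ℂ)) * ((ν x : ℂ) * (∏ i, t i) x) := by
      intro x
      rw [Finset.prod_mul_distrib, AddChar.prod_apply]
      ring
    simp_rw [this, ← Finset.mul_sum, hseq]
  have hre : (0:ℝ) ≤ ∑ t ∈ Fintype.piFinset (fun _ : Fin n => (Finset.univ : Finset (AddChar G ℂ))),
      ((∏ i, rc (t i)) * s (∏ i, t i)) := by
    refine Finset.sum_nonneg fun t _ => mul_nonneg (Finset.prod_nonneg fun i _ => hrc0 _) (hs0 _)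
  have : ((∑ x, ν x * f x ^ n : ℝ) : ℂ) = ((∑ t ∈ Fintype.piFinset (fun _ : Fin n =>
      (Finset.univ : Finset (AddChar G ℂ))), ((∏ i, rc (t i)) * s (∏ i, t i)) : ℝ) : ℂ) := by
    rw [key]; push_cast; rfl
  have := Complex.ofReal_injective this
  rw [this]; exact hre

set_option maxHeartbeats 2000000 in
/-- **Unbalancing.** For every `ε ∈ (0,1)` there is `C > 0` (depending only on `ε`) such that:
if `ν` is a probability measure with nonnegative Fourier transform and `f : G → ℝ` has
nonnegative Fourier transform with `‖f‖_{p(ν)} ≥ ε` for some `p ≥ 1`, then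
`‖f + 1‖_{p'(ν)} ≥ 1 + ε/2` for some `1 ≤ p' ≤ C·p`. -/
theorem statement7 :
    ∀ ε : ℝ, ε ∈ Set.Ioo (0 : ℝ) 1 → ∃ C > (0 : ℝ),
      ∀ (G : Type) [AddCommGroup G] [Fintype G],
      ∀ ν : G → ℝ, (∀ x, 0 ≤ ν x) → gavg ν = 1 → FourierNonneg ν →
      ∀ f : G → ℝ, FourierNonneg f →
      ∀ p : ℝ, 1 ≤ p → ε ≤ gnorm p ν f →
      ∃ p' : ℝ, 1 ≤ p' ∧ p' ≤ C * p ∧ 1 + ε / 2 ≤ gnorm p' ν (fun x => f x + 1) := by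
  rintro ε ⟨hε0, hε1⟩
  have hL : 0 < Real.log (1 + ε / 6) := Real.log_pos (by linarith)
  set L := Real.log (1 + ε / 6) with hLdef
  have hA : 0 < 2 * Real.log (2 / ε) + Real.log 16 := by
    have h2 : 0 < Real.log (2 / ε) := Real.log_pos (by rw [lt_div_iff₀ hε0]; linarith)
    have h16 : 0 < Real.log 16 := Real.log_pos (by norm_num)
    linarith
  set A := 2 * Real.log (2 / ε) + Real.log 16 with hAdef
  set K := 2 + A / L with hKdef
  have hK2 : 2 ≤ K := le_add_of_nonneg_right (by positivity)
  have hK0 : 0 < K := by linarith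
  refine ⟨9 * K, by positivity, ?_⟩
  intro G' _ _ ν hν0 hν1 hνF f hfF p hp hfp
  have hcard : 0 < (Fintype.card G' : ℝ) := by exact_mod_cast Fintype.card_pos
  set n : ℝ := (Fintype.card G' : ℝ) with hndef
  have hνsum : ∑ x, ν x = n := by
    have h := hν1
    unfold gavg at h
    field_simp at h
    linarith [h]
  have hp0 : 0 < p := lt_of_lt_of_le one_pos hp
  set q : ℕ := 2 * ⌈p⌉₊ + 5 with hqdef
  have hq5 : 5 ≤ q := by omega
  have hqodd : Odd q := ⟨⌈p⌉₊ + 2, by omega⟩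
  have hq1 : 1 ≤ (q : ℝ) := by exact_mod_cast Nat.one_le_iff_ne_zero.2 (by omega)
  have hqp : p ≤ (q : ℝ) := by
    have h1 : p ≤ (⌈p⌉₊ : ℝ) := Nat.le_ceil p
    have h2 : ((⌈p⌉₊ : ℕ) : ℝ) ≤ (q : ℝ) := by exact_mod_cast Nat.le_of_lt_succ (by omega)
    linarith
  have hq9 : (q : ℝ) ≤ 9 * p := by
    have h1 : (⌈p⌉₊ : ℝ) ≤ p + 1 := (Nat.ceil_lt_add_one hp0.le).le
    have h2 : (q : ℝ) = 2 * (⌈p⌉₊ : ℝ) + 5 := by push_cast [hqdef]; ring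
    linarith
  -- Step A : moment lower bound at exponent q
  have hEp0 : 0 ≤ gavg fun x => ν x * |f x| ^ p := by
    unfold gavg
    have : 0 ≤ ∑ x, ν x * |f x| ^ p :=
      Finset.sum_nonneg fun x _ => mul_nonneg (hν0 x) (Real.rpow_nonneg (abs_nonneg _) _)
    positivity
  have hEp : ε ^ p ≤ gavg fun x => ν x * |f x| ^ p := by
    have h := Real.rpow_le_rpow hε0.le hfp hp0.le
    rwa [gnorm, ← Real.rpow_mul hEp0, one_div, inv_mul_cancel₀ hp0.ne',
      Real.rpow_one] at h
  -- Jensen: exponent monotonicity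
  have hJ : ε ^ q * n ≤ ∑ x, ν x * |f x| ^ q := by
    have hw : ∀ x ∈ (Finset.univ : Finset G'), 0 ≤ ν x / n := fun x _ =>
      div_nonneg (hν0 x) hcard.le
    have hw' : ∑ x, ν x / n = 1 := by rw [← Finset.sum_div, hνsum, div_self hcard.ne']
    have hz : ∀ x ∈ (Finset.univ : Finset G'), 0 ≤ |f x| ^ p := fun x _ =>
      Real.rpow_nonneg (abs_nonneg _) _
    have hr1 : 1 ≤ (q : ℝ) / p := (one_le_div hp0).2 hqp
    have hjen := Real.rpow_arith_mean_le_arith_mean_rpow Finset.univ (fun x => ν x / n)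
      (fun x => |f x| ^ p) hw hw' hz hr1
    have hsum1 : ∑ x, ν x / n * |f x| ^ p = gavg fun x => ν x * |f x| ^ p := by
      simp only [gavg]
      rw [← hndef, Finset.sum_div]
      exact Finset.sum_congr rfl fun x _ => by ring
    have hz2 : ∀ x : G', (|f x| ^ p) ^ ((q : ℝ) / p) = |f x| ^ (q : ℕ) := by
      intro x
      rw [← Real.rpow_natCast |f x| q, ← Real.rpow_mul (abs_nonneg _)]
      congr 1; field_simp
    simp only [hsum1] at hjen
    simp only [hz2] at hjen
    have hεq : ε ^ (q : ℕ) ≤ (gavg fun x => ν x * |f x| ^ p) ^ ((q : ℝ) / p) := by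
      calc ε ^ (q : ℕ) = (ε ^ p) ^ ((q : ℝ) / p) := by
            rw [← Real.rpow_natCast ε q, ← Real.rpow_mul hε0.le]; congr 1; field_simp
        _ ≤ _ := Real.rpow_le_rpow (by positivity) hEp (by positivity)
    have h2 : ε ^ (q : ℕ) ≤ ∑ x, ν x / n * |f x| ^ (q : ℕ) := le_trans hεq hjen
    have h3 : ∑ x, ν x / n * |f x| ^ (q : ℕ) = (∑ x, ν x * |f x| ^ (q : ℕ)) / n := by
      rw [Finset.sum_div]; exact Finset.sum_congr rfl fun x _ => by ring
    rw [h3, le_div_iff₀ hcard] at h2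
    linarith
  -- Step B : positive part has large moment
  have hmom : 0 ≤ ∑ x, ν x * f x ^ q := moment_nonneg hνF hfF q
  set g : G' → ℝ := fun x => max (f x) 0 with hgdef
  have hg0 : ∀ x, 0 ≤ g x := fun x => le_max_right _ _
  have hgid : ∀ x : G', ν x * g x ^ q * 2 = ν x * |f x| ^ q + ν x * f x ^ q := by
    intro x
    rcases le_total (f x) 0 with h | h
    · have h1 : g x = 0 := max_eq_right h
      have h2 : |f x| = -f x := abs_of_nonpos h
      rw [h1, h2, zero_pow (by omega : q ≠ 0), hqodd.neg_pow]
      ring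
    · have h1 : g x = f x := max_eq_left h
      rw [h1, abs_of_nonneg h]; ring
  have hSplus : ε ^ q * n / 2 ≤ ∑ x, ν x * g x ^ q := by
    have h1 : (∑ x, ν x * g x ^ q) * 2 = (∑ x, ν x * |f x| ^ q) + ∑ x, ν x * f x ^ q := by
      rw [Finset.sum_mul, ← Finset.sum_add_distrib]
      exact Finset.sum_congr rfl fun x _ => hgid x
    linarith
  -- Step C : restrict to the level set T
  set T : Finset G' := Finset.univ.filter fun x => 3 * ε / 4 ≤ f x with hTdef
  have hout : ∑ x ∈ Finset.univ.filter (fun x => ¬ 3 * ε / 4 ≤ f x), ν x * g x ^ q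
      ≤ (3 / 4 : ℝ) ^ q * ε ^ q * n := by
    calc ∑ x ∈ Finset.univ.filter (fun x => ¬ 3 * ε / 4 ≤ f x), ν x * g x ^ q
        ≤ ∑ x ∈ Finset.univ.filter (fun x => ¬ 3 * ε / 4 ≤ f x), ν x * (3 * ε / 4) ^ q := by
          refine Finset.sum_le_sum fun x hx => ?_
          have hfx : f x < 3 * ε / 4 := by
            have := (Finset.mem_filter.mp hx).2; linarith [not_le.mp this]
          have hgx : g x ≤ 3 * ε / 4 := max_le hfx.le (by positivity)
          exact mul_le_mul_of_nonneg_left (pow_le_pow_left₀ (hg0 x) hgx q) (hν0 x)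
      _ ≤ ∑ x, ν x * (3 * ε / 4) ^ q := by
          refine Finset.sum_le_sum_of_subset_of_nonneg (Finset.subset_univ _) fun x _ _ => ?_
          have := hν0 x; positivity
      _ = (3 / 4 : ℝ) ^ q * ε ^ q * n := by
          rw [← Finset.sum_mul, hνsum, show 3 * ε / 4 = 3 / 4 * ε by ring, mul_pow]; ring
  have h34 : (3 / 4 : ℝ) ^ q ≤ 1 / 4 := by
    calc (3 / 4 : ℝ) ^ q ≤ (3 / 4 : ℝ) ^ 5 :=
          pow_le_pow_of_le_one (by norm_num) (by norm_num) hq5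
      _ ≤ 1 / 4 := by norm_num
  have hT : ε ^ q * n / 4 ≤ ∑ x ∈ T, ν x * f x ^ q := by
    have hsplit := Finset.sum_filter_add_sum_filter_not Finset.univ
      (fun x => 3 * ε / 4 ≤ f x) (fun x => ν x * g x ^ q)
    have hTf : ∑ x ∈ T, ν x * g x ^ q = ∑ x ∈ T, ν x * f x ^ q := by
      refine Finset.sum_congr rfl fun x hx => ?_
      have hfx : 3 * ε / 4 ≤ f x := (Finset.mem_filter.mp hx).2
      have h0 : (0:ℝ) ≤ f x := by linarith
      simp only [hgdef, max_eq_left h0]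
    have hεn : 0 ≤ ε ^ q * n := by positivity
    have h5 : (3 / 4 : ℝ) ^ q * ε ^ q * n ≤ ε ^ q * n / 4 := by nlinarith
    rw [← hTf]
    rw [← hTdef] at hsplit
    linarith
  -- Step D : case split on the norm at exponent 2q
  by_cases hcase : 1 + ε / 2 ≤ gnorm (2 * (q : ℝ)) ν (fun x => f x + 1)
  · refine ⟨2 * (q : ℝ), by linarith, ?_, hcase⟩
    nlinarith
  · push_neg at hcase
    have h2q0 : (0 : ℝ) < 2 * (q : ℝ) := by linarith
    have hgavg20 : 0 ≤ gavg fun x => ν x * |f x + 1| ^ (2 * (q : ℝ)) := by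
      unfold gavg
      have h0 : 0 ≤ ∑ x, ν x * |f x + 1| ^ (2 * (q : ℝ)) :=
        Finset.sum_nonneg fun x _ => mul_nonneg (hν0 x) (Real.rpow_nonneg (abs_nonneg _) _)
      positivity
    have hgn0 : 0 ≤ gnorm (2 * (q : ℝ)) ν (fun x => f x + 1) :=
      Real.rpow_nonneg hgavg20 _
    have hE2 : gavg (fun x => ν x * |f x + 1| ^ (2 * (q : ℝ))) ≤ (1 + ε / 2) ^ (2 * (q : ℝ)) := by
      have hpow : gnorm (2 * (q : ℝ)) ν (fun x => f x + 1) ^ (2 * (q : ℝ))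
          = gavg fun x => ν x * |f x + 1| ^ (2 * (q : ℝ)) := by
        unfold gnorm
        rw [← Real.rpow_mul hgavg20, one_div, inv_mul_cancel₀ h2q0.ne', Real.rpow_one]
      rw [← hpow]
      exact Real.rpow_le_rpow hgn0 hcase.le h2q0.le
    have hE2' : ∑ x, ν x * |f x + 1| ^ (2 * q : ℕ) ≤ (1 + ε / 2) ^ (2 * q : ℕ) * n := by
      have hcast : (2 : ℝ) * (q : ℝ) = ((2 * q : ℕ) : ℝ) := by push_cast; ring
      rw [hcast] at hE2
      simp only [Real.rpow_natCast] at hE2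
      simp only [gavg] at hE2
      rw [← hndef, div_le_iff₀ hcard] at hE2
      linarith
    -- Cauchy-Schwarz
    set m := ∑ x ∈ T, ν x with hmdef
    have hm0 : 0 ≤ m := Finset.sum_nonneg fun x _ => hν0 x
    have hCS : (∑ x ∈ T, ν x * f x ^ q) ^ 2 ≤ m * ∑ x ∈ T, ν x * f x ^ (2 * q) := by
      refine Finset.sum_sq_le_sum_mul_sum_of_sq_eq_mul T (r := fun x => ν x * f x ^ q)
        (f := fun x => ν x) (g := fun x => ν x * f x ^ (2 * q)) (fun x _ => hν0 x)
        (fun x _ => mul_nonneg (hν0 x) (by rw [pow_mul]; positivity)) (fun x _ => ?_)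
      rw [mul_pow, ← pow_mul, Nat.mul_comm q 2]; ring
    have hT2 : ∑ x ∈ T, ν x * f x ^ (2 * q) ≤ ∑ x, ν x * |f x + 1| ^ (2 * q) := by
      calc ∑ x ∈ T, ν x * f x ^ (2 * q) ≤ ∑ x ∈ T, ν x * |f x + 1| ^ (2 * q) := by
            refine Finset.sum_le_sum fun x hx => ?_
            have hfx : 3 * ε / 4 ≤ f x := (Finset.mem_filter.mp hx).2
            have h0 : 0 ≤ f x := by linarith
            have h1 : f x ≤ |f x + 1| := by rw [abs_of_nonneg (by linarith)]; linarith
            exact mul_le_mul_of_nonneg_left (pow_le_pow_left₀ h0 h1 _) (hν0 x)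
        _ ≤ ∑ x, ν x * |f x + 1| ^ (2 * q) :=
            Finset.sum_le_sum_of_subset_of_nonneg (Finset.subset_univ _) fun x _ _ =>
              mul_nonneg (hν0 x) (pow_nonneg (abs_nonneg _) _)
    have hm : (ε / 2) ^ (2 * q) / 16 * n ≤ m := by
      have h6 : (ε ^ q * n / 4) ^ 2 ≤ m * ((1 + ε / 2) ^ (2 * q) * n) := by
        have h7 : ∑ x ∈ T, ν x * f x ^ (2 * q) ≤ (1 + ε / 2) ^ (2 * q) * n :=
          le_trans hT2 hE2'
        have h8 : (ε ^ q * n / 4) ^ 2 ≤ (∑ x ∈ T, ν x * f x ^ q) ^ 2 :=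
          pow_le_pow_left₀ (by positivity) hT 2
        nlinarith
      have h9 : (ε / 2) ^ (2 * q) * (1 + ε / 2) ^ (2 * q) ≤ ε ^ (2 * q) := by
        rw [← mul_pow]
        exact pow_le_pow_left₀ (by positivity) (by nlinarith) _
      have h10 : (ε ^ q * n / 4) ^ 2 = ε ^ (2 * q) * n ^ 2 / 16 := by
        have he : ε ^ (2 * q) = (ε ^ q) ^ 2 := by rw [Nat.mul_comm, pow_mul]
        rw [he]; ring
      have h11 : ((ε / 2) ^ (2 * q) / 16 * n) * ((1 + ε / 2) ^ (2 * q) * n)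
          ≤ m * ((1 + ε / 2) ^ (2 * q) * n) := by
        calc ((ε / 2) ^ (2 * q) / 16 * n) * ((1 + ε / 2) ^ (2 * q) * n)
            = ((ε / 2) ^ (2 * q) * (1 + ε / 2) ^ (2 * q)) * n ^ 2 / 16 := by ring
          _ ≤ ε ^ (2 * q) * n ^ 2 / 16 := by
              have hn2 : (0:ℝ) ≤ n ^ 2 / 16 := by positivity
              nlinarith
          _ = (ε ^ q * n / 4) ^ 2 := h10.symm
          _ ≤ m * ((1 + ε / 2) ^ (2 * q) * n) := h6
      exact le_of_mul_le_mul_right h11 (by positivity)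
    -- Step E : conclude with p' = K q
    refine ⟨K * q, by nlinarith, by nlinarith, ?_⟩
    set p' := K * (q : ℝ) with hp'def
    have hp'0 : 0 < p' := mul_pos hK0 (by linarith)
    have hδ1 : 1 ≤ (ε / 2) ^ (2 * q) / 16 * (1 + ε / 6) ^ p' := by
      have hb : (0 : ℝ) < 1 + ε / 6 := by linarith
      have hδpos : (0 : ℝ) < (ε / 2) ^ (2 * q) / 16 := by positivity
      have hlog : 0 ≤ Real.log ((ε / 2) ^ (2 * q) / 16 * (1 + ε / 6) ^ p') := by
        rw [Real.log_mul hδpos.ne' (by positivity), Real.log_rpow hb,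
          Real.log_div (by positivity) (by norm_num), Real.log_pow]
        have hεlog : Real.log (ε / 2) = -Real.log (2 / ε) := by
          rw [← Real.log_inv]; congr 1; rw [inv_div]
        have hpL : p' * L = 2 * (q : ℝ) * L + (q : ℝ) * A := by
          rw [hp'def, hKdef]
          field_simp
        have hlog2ε : 0 ≤ Real.log (2 / ε) :=
          le_of_lt (Real.log_pos (by rw [lt_div_iff₀ hε0]; linarith))
        have hlog16 : 0 ≤ Real.log 16 := Real.log_nonneg (by norm_num)
        rw [hεlog, ← hLdef]
        rw [hAdef] at hpL
        have hcast2 : ((2 * q : ℕ) : ℝ) = 2 * (q : ℝ) := by push_cast; ring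
        rw [hcast2]
        linarith [hpL, mul_nonneg (sub_nonneg.2 hq1) hlog16,
          mul_nonneg (by linarith : (0:ℝ) ≤ 2 * (q:ℝ)) hL.le]
      have hy : (0 : ℝ) < (ε / 2) ^ (2 * q) / 16 * (1 + ε / 6) ^ p' := by positivity
      calc (1 : ℝ) ≤ Real.exp (Real.log ((ε / 2) ^ (2 * q) / 16 * (1 + ε / 6) ^ p')) :=
            Real.one_le_exp hlog
        _ = _ := Real.exp_log hy
    have hptw : ∀ x ∈ T, ν x * (1 + 3 * ε / 4) ^ p' ≤ ν x * |f x + 1| ^ p' := by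
      intro x hx
      have hfx : 3 * ε / 4 ≤ f x := (Finset.mem_filter.mp hx).2
      have h1 : (1 : ℝ) + 3 * ε / 4 ≤ |f x + 1| := by
        rw [abs_of_nonneg (by linarith)]; linarith
      exact mul_le_mul_of_nonneg_left (Real.rpow_le_rpow (by positivity) h1 hp'0.le) (hν0 x)
    have hcomb : (1 + ε / 6) ^ p' * (1 + ε / 2) ^ p' ≤ (1 + 3 * ε / 4) ^ p' := by
      rw [← Real.mul_rpow (by linarith) (by linarith)]
      exact Real.rpow_le_rpow (by nlinarith) (by nlinarith) hp'0.le
    have hsum' : (1 + ε / 2) ^ p' * n ≤ ∑ x, ν x * |f x + 1| ^ p' := by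
      calc (1 + ε / 2) ^ p' * n
          ≤ ((ε / 2) ^ (2 * q) / 16 * (1 + ε / 6) ^ p') * ((1 + ε / 2) ^ p' * n) := by
            refine le_mul_of_one_le_left ?_ hδ1
            have : (0:ℝ) ≤ (1 + ε / 2) ^ p' := Real.rpow_nonneg (by linarith) _
            positivity
        _ = ((ε / 2) ^ (2 * q) / 16 * n) * ((1 + ε / 6) ^ p' * (1 + ε / 2) ^ p') := by ring
        _ ≤ ((ε / 2) ^ (2 * q) / 16 * n) * (1 + 3 * ε / 4) ^ p' := by
            refine mul_le_mul_of_nonneg_left hcomb ?_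
            positivity
        _ ≤ m * (1 + 3 * ε / 4) ^ p' := by
            refine mul_le_mul_of_nonneg_right hm (Real.rpow_nonneg (by linarith) _)
        _ = ∑ x ∈ T, ν x * (1 + 3 * ε / 4) ^ p' := by rw [← Finset.sum_mul]
        _ ≤ ∑ x ∈ T, ν x * |f x + 1| ^ p' := Finset.sum_le_sum hptw
        _ ≤ ∑ x, ν x * |f x + 1| ^ p' :=
            Finset.sum_le_sum_of_subset_of_nonneg (Finset.subset_univ _) fun x _ _ =>
              mul_nonneg (hν0 x) (Real.rpow_nonneg (abs_nonneg _) _)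
    have hEfin : (1 + ε / 2) ^ p' ≤ gavg fun x => ν x * |f x + 1| ^ p' := by
      simp only [gavg]
      rw [← hndef, le_div_iff₀ hcard]
      linarith
    calc (1 : ℝ) + ε / 2 = ((1 + ε / 2) ^ p') ^ (1 / p') := by
          rw [← Real.rpow_mul (by linarith), mul_one_div, div_self hp'0.ne', Real.rpow_one]
      _ ≤ (gavg fun x => ν x * |f x + 1| ^ p') ^ (1 / p') := by
          refine Real.rpow_le_rpow (Real.rpow_nonneg (by linarith) _) hEfin (by positivity)
      _ = gnorm p' ν (fun x => f x + 1) := rfl
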